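/- arXiv:2307.11676 — 8 statements merged into one kernel-verified Lean document; each statement's English description precedes it below -/
import Mathlib

section
/- Let (E, 𝓔, ν) be a σ-finite measure space, Ψ : E → E a measurable non-singular transformation, and m a natural number such that the pushforward measure ν_m := ν∘Ψ^{-m} is σ-finite. Let f_{Ψ^m} denote the Radon–Nikodym derivative of ν_m with respect to ν, and set E_m := { x ∈ E : f_{Ψ^m}(x) = 0 }. Then for every measurable function f : E → ℂ, one has f∘Ψ^m = 0 ν-almost everywhere if and only if f = 0 ν-almost everywhere on the complement E \ E_m. -/
open MeasureTheory

/-- Let `ν` be σ-finite, `Ψ` measurable and non-singular, and suppose the pushforward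
`ν_m := ν ∘ Ψ^{-m}` is σ-finite.  With `f_{Ψ^m}` the Radon–Nikodym derivative of `ν_m`
w.r.t. `ν` and `E_m = {x | f_{Ψ^m} x = 0}`, a measurable function `f : E → ℂ` satisfies
`f ∘ Ψ^m = 0` ν-a.e. iff `f = 0` ν-a.e. on the complement `E \ E_m`. -/
theorem comp_iterate_ae_zero_iff_ae_zero_off_vanishing_set
    {E : Type*} [MeasurableSpace E] (ν : Measure E) [SigmaFinite ν]
    (Ψ : E → E) (hΨ : Measurable Ψ) (hns : ν.map Ψ ≪ ν) (m : ℕ)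
    (hσ : SigmaFinite (ν.map (Ψ^[m])))
    (Em : Set E) (hEm : Em = {x | (ν.map (Ψ^[m])).rnDeriv ν x = 0})
    (f : E → ℂ) (hf : Measurable f) :
    (f ∘ Ψ^[m] =ᵐ[ν] 0) ↔ (f =ᵐ[ν.restrict Emᶜ] 0) := by
  have hm : Measurable (Ψ^[m]) := hΨ.iterate m
  -- absolute continuity of the iterate pushforward
  have habs : ∀ n : ℕ, ν.map (Ψ^[n]) ≪ ν := by
    intro n
    induction n with
    | zero => simpa [Measure.map_id] using Measure.AbsolutelyContinuous.rfl
    | succ n ih =>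
      rw [Function.iterate_succ', ← Measure.map_map hΨ (hΨ.iterate n)]
      exact (ih.map hΨ).trans hns
  -- LHS ↔ a.e. zero w.r.t. pushforward
  have h1 : (f ∘ Ψ^[m] =ᵐ[ν] 0) ↔ (f =ᵐ[ν.map (Ψ^[m])] 0) := by
    simp only [Filter.EventuallyEq, Function.comp_apply, Pi.zero_apply]
    rw [ae_map_iff (p := fun x => f x = 0) hm.aemeasurable (hf (measurableSet_singleton 0))]
  have hrn : Measurable ((ν.map (Ψ^[m])).rnDeriv ν) := Measure.measurable_rnDeriv _ _
  have heq : ν.withDensity ((ν.map (Ψ^[m])).rnDeriv ν) = ν.map (Ψ^[m]) :=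
    Measure.withDensity_rnDeriv_eq _ _ (habs m)
  rw [h1, ← heq]
  rw [Filter.EventuallyEq, ae_withDensity_iff hrn]
  rw [Filter.EventuallyEq, ae_restrict_iff' (by rw [hEm]; exact (hrn (measurableSet_singleton 0)).compl)]
  constructor <;> intro h <;> filter_upwards [h] with x hx hx'
  · exact hx (by simpa [hEm] using hx')
  · exact hx (by simpa [hEm] using hx')
end

section
/- Let (E, 𝓔, ν) be a σ-finite measure space and Ψ : E → E a measurable non-singular transformation. For each natural number m let K_m denote the set of measurable functions f : E → ℂ such that f∘Ψ^m = 0 ν-almost everywhere, and let ν_m := ν∘Ψ^{-m}. Then for every m, K_m = K_{m+1} if and only if the measures ν_m and ν_{m+1} are equivalent; consequently, a natural number m is the least index with K_m = K_{m+1} if and only if it is the least index such that ν_m and ν_{m+1} are equivalent. -/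
open MeasureTheory

/-- With `K m` the null space of the `m`-th power of the composition operator
(measurable `f : E → ℂ` with `f ∘ Ψ^m = 0` ν-a.e.) and `ν_m := ν ∘ Ψ^{-m}`:
for every `m`, `K m = K (m+1)` iff `ν_m` and `ν_{m+1}` are equivalent; consequently
`m` is the least index with `K m = K (m+1)` iff it is the least index at which
`ν_m` and `ν_{m+1}` are equivalent. -/
theorem nullspace_eq_iff_pushforward_equivalent
    {E : Type*} [MeasurableSpace E] (ν : Measure E) [SigmaFinite ν]
    (Ψ : E → E) (hΨ : Measurable Ψ) (hns : ν.map Ψ ≪ ν)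
    (K : ℕ → Set (E → ℂ))
    (hK : ∀ m, K m = {f | Measurable f ∧ f ∘ Ψ^[m] =ᵐ[ν] 0}) :
    (∀ m, K m = K (m + 1) ↔
        (ν.map (Ψ^[m]) ≪ ν.map (Ψ^[m + 1]) ∧ ν.map (Ψ^[m + 1]) ≪ ν.map (Ψ^[m]))) ∧
      (∀ m : ℕ, IsLeast {m | K m = K (m + 1)} m ↔
        IsLeast {m | ν.map (Ψ^[m]) ≪ ν.map (Ψ^[m + 1]) ∧
          ν.map (Ψ^[m + 1]) ≪ ν.map (Ψ^[m])} m) := by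
  have hm : ∀ k, Measurable (Ψ^[k]) := fun k => hΨ.iterate k
  -- a.e. vanishing along `Ψ^[k]` is a statement about the pushforward measure
  have hzero : ∀ (f : E → ℂ) (k : ℕ), Measurable f →
      ((f ∘ Ψ^[k] =ᵐ[ν] 0) ↔ ν.map (Ψ^[k]) {x | f x ≠ 0} = 0) := by
    intro f k hf
    have hms : MeasurableSet {x | f x ≠ 0} := (hf (measurableSet_singleton 0)).compl
    rw [Measure.map_apply (hm k) hms]
    have hset : {x | ¬ (f ∘ Ψ^[k]) x = (0 : E → ℂ) x} = Ψ^[k] ⁻¹' {x | f x ≠ 0} := rfl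
    constructor
    · intro h
      have h' := ae_iff.mp h
      rwa [hset] at h'
    · intro h
      refine ae_iff.mpr ?_
      rwa [hset]
  -- the `(m+1)`-st pushforward is always ≪ the `m`-th one
  have h2 : ∀ m : ℕ, ν.map (Ψ^[m + 1]) ≪ ν.map (Ψ^[m]) := by
    intro m
    have : ν.map (Ψ^[m + 1]) = (ν.map Ψ).map (Ψ^[m]) := by
      rw [Measure.map_map (hm m) hΨ, Function.iterate_succ]
    rw [this]
    exact hns.map (hm m)
  have key : ∀ m, K m = K (m + 1) ↔
      (ν.map (Ψ^[m]) ≪ ν.map (Ψ^[m + 1]) ∧ ν.map (Ψ^[m + 1]) ≪ ν.map (Ψ^[m])) := by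
    intro m
    constructor
    · intro hKe
      refine ⟨Measure.AbsolutelyContinuous.mk ?_, h2 m⟩
      intro s hs h0
      set f : E → ℂ := s.indicator 1 with hfdef
      have hf : Measurable f := measurable_one.indicator hs
      have hne : {x | f x ≠ 0} = s := by
        ext x
        simp [hfdef, Set.indicator_apply]
      have hfK : f ∈ K (m + 1) := by
        rw [hK]
        exact ⟨hf, (hzero f (m + 1) hf).mpr (by rw [hne]; exact h0)⟩
      rw [← hKe, hK] at hfK
      have := (hzero f m hf).mp hfK.2
      rwa [hne] at this
    · rintro ⟨ha, hb⟩
      ext f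
      rw [hK, hK]
      simp only [Set.mem_setOf_eq]
      constructor
      · rintro ⟨hf, h0⟩
        exact ⟨hf, (hzero f (m + 1) hf).mpr (hb ((hzero f m hf).mp h0))⟩
      · rintro ⟨hf, h0⟩
        exact ⟨hf, (hzero f m hf).mpr (ha ((hzero f (m + 1) hf).mp h0))⟩
  refine ⟨key, fun m => ?_⟩
  have hset : {m | K m = K (m + 1)} =
      {m | ν.map (Ψ^[m]) ≪ ν.map (Ψ^[m + 1]) ∧ ν.map (Ψ^[m + 1]) ≪ ν.map (Ψ^[m])} :=
    Set.ext key
  rw [hset]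
end

section
/- Let (E, 𝓔, ν) be a σ-finite measure space and Ψ : E → E a measurable non-singular transformation. For each natural number m let K_m denote the set of measurable functions f : E → ℂ such that f∘Ψ^m = 0 ν-almost everywhere, and let ν_m := ν∘Ψ^{-m}. Then K_m ≠ K_{m+1} holds for every natural number m (i.e. the composition operator has infinite ascent) if and only if for every natural number m the measures ν_m and ν_{m+1} are not equivalent. -/
open MeasureTheory

/-- With `K m` the null space of the `m`-th power of the composition operator
(measurable `f : E → ℂ` with `f ∘ Ψ^m = 0` ν-a.e.) and `ν_m := ν ∘ Ψ^{-m}`: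
the composition operator has infinite ascent (`K m ≠ K (m+1)` for all `m`) iff
for every `m` the measures `ν_m` and `ν_{m+1}` are not equivalent. -/
theorem infinite_ascent_iff_never_equivalent
    {E : Type*} [MeasurableSpace E] (ν : Measure E) [SigmaFinite ν]
    (Ψ : E → E) (hΨ : Measurable Ψ) (hns : ν.map Ψ ≪ ν)
    (K : ℕ → Set (E → ℂ))
    (hK : ∀ m, K m = {f | Measurable f ∧ f ∘ Ψ^[m] =ᵐ[ν] 0}) :
    (∀ m, K m ≠ K (m + 1)) ↔
      (∀ m, ¬ (ν.map (Ψ^[m]) ≪ ν.map (Ψ^[m + 1]) ∧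
        ν.map (Ψ^[m + 1]) ≪ ν.map (Ψ^[m]))) := by
  have hiter : ∀ m, Measurable (Ψ^[m]) := fun m => hΨ.iterate m
  have hchain : ∀ m, ν.map (Ψ^[m + 1]) ≪ ν.map (Ψ^[m]) := by
    intro m
    rw [Function.iterate_succ, ← Measure.map_map (hiter m) hΨ]
    exact hns.map (hiter m)
  have hae : ∀ (m : ℕ) (f : E → ℂ), Measurable f →
      (f ∘ Ψ^[m] =ᵐ[ν] 0 ↔ f =ᵐ[ν.map (Ψ^[m])] 0) := by
    intro m f hf
    have hms : MeasurableSet {y : E | f y = 0} := hf (measurableSet_singleton 0)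
    have h2 := ae_map_iff (μ := ν) (hiter m).aemeasurable hms
    simp only [Filter.EventuallyEq, Pi.zero_apply, Function.comp_apply,
      Set.mem_setOf_eq] at h2 ⊢
    exact h2.symm
  have key : ∀ m, K m ≠ K (m + 1) ↔ ¬ ν.map (Ψ^[m]) ≪ ν.map (Ψ^[m + 1]) := by
    intro m
    constructor
    · intro hne hac
      apply hne
      rw [hK m, hK (m + 1)]
      ext f
      simp only [Set.mem_setOf_eq]
      constructor
      · rintro ⟨hf, h0⟩
        exact ⟨hf, (hae (m + 1) f hf).2
          (((hae m f hf).1 h0).filter_mono (hchain m).ae_le)⟩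
      · rintro ⟨hf, h0⟩
        exact ⟨hf, (hae m f hf).2
          (((hae (m + 1) f hf).1 h0).filter_mono hac.ae_le)⟩
    · intro hnac heq
      obtain ⟨s, hs, hs1, hs0⟩ : ∃ s, MeasurableSet s ∧
          ν.map (Ψ^[m + 1]) s = 0 ∧ ν.map (Ψ^[m]) s ≠ 0 := by
        by_contra h
        push_neg at h
        exact hnac (Measure.AbsolutelyContinuous.mk fun s hs h0 => h s hs h0)
      set f : E → ℂ := s.indicator (fun _ => 1) with hfdef
      have hf : Measurable f := (measurable_const.indicator hs)
      have hmem1 : f ∈ K (m + 1) := by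
        rw [hK (m + 1)]
        refine ⟨hf, (hae (m + 1) f hf).2 ?_⟩
        have : ∀ᵐ x ∂ν.map (Ψ^[m + 1]), x ∉ s := by
          rw [ae_iff]
          simpa using hs1
        filter_upwards [this] with x hx
        simp [hfdef, Set.indicator_of_notMem hx]
      have hmem0 : f ∉ K m := by
        rw [hK m]
        rintro ⟨-, h0⟩
        have h0' : f =ᵐ[ν.map (Ψ^[m])] 0 := (hae m f hf).1 h0
        have hsub : s ⊆ {x | ¬ f x = (0 : (E → ℂ)) x} := by
          intro x hx
          simp only [Set.mem_setOf_eq, hfdef, Set.indicator_of_mem hx,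
            Pi.zero_apply]
          norm_num
        have : ν.map (Ψ^[m]) s = 0 :=
          measure_mono_null hsub h0'
        exact hs0 this
      exact hmem0 (heq ▸ hmem1)
  constructor
  · intro h m
    rintro ⟨h1, -⟩
    exact (key m).1 (h m) h1
  · intro h m
    exact (key m).2 fun h1 => h m ⟨h1, hchain m⟩
end

section
/- Let (E, 𝓔, ν) be a σ-finite measure space and Ψ : E → E a measurable non-singular transformation such that the image Ψ(S) of every measurable set S is measurable. Suppose that for every m ≥ 1 there exists a measurable function f_m : E → ℂ with f_m∘Ψ^m = 0 ν-almost everywhere and ν({x ∈ E : f_m(Ψ^{m-1}(x)) ≠ 0}) > 0 (i.e. the composition operator C_Ψ has infinite ascent). Then there exists a sequence (A_m)_{m > 1} of measurable subsets of E such that for all m > 1: (1) 0 < ν(A_m) < ∞; (2) A_m ⊆ Ψ^{m-1}(B) for some measurable set B; and (3) A_m is not of the form Ψ^m(S) for any measurable set S with ν(S) > 0. -/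
open MeasureTheory

private lemma image_iterate_measurable {E : Type*} [MeasurableSpace E] {Ψ : E → E}
    (himg : ∀ S : Set E, MeasurableSet S → MeasurableSet (Ψ '' S)) :
    ∀ (k : ℕ) (S : Set E), MeasurableSet S → MeasurableSet (Ψ^[k] '' S) := by
  intro k
  induction k with
  | zero => intro S hS; simpa using hS
  | succ n ih =>
      intro S hS
      rw [Function.iterate_succ', Set.image_comp]
      exact himg _ (ih S hS)

private lemma preimage_iterate_null {E : Type*} [MeasurableSpace E] {ν : Measure E}
    {Ψ : E → E} (hΨ : Measurable Ψ) (hns : ν.map Ψ ≪ ν) :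
    ∀ (k : ℕ) (T : Set E), MeasurableSet T → ν T = 0 → ν (Ψ^[k] ⁻¹' T) = 0 := by
  intro k
  induction k with
  | zero => intro T _ hT0; simpa using hT0
  | succ n ih =>
      intro T hT hT0
      rw [Function.iterate_succ, Set.preimage_comp]
      have h1 : ν (Ψ^[n] ⁻¹' T) = 0 := ih T hT hT0
      have hmeas : MeasurableSet (Ψ^[n] ⁻¹' T) := (hΨ.iterate n) hT
      have := hns h1
      rwa [Measure.map_apply hΨ hmeas] at this

/-- Suppose `ν` is σ-finite, `Ψ` is measurable, non-singular, and maps measurable sets to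
measurable sets.  If the composition operator has infinite ascent — i.e. for every `m ≥ 1`
there is a measurable `f : E → ℂ` with `f ∘ Ψ^m = 0` ν-a.e. while
`ν {x | f (Ψ^{m-1} x) ≠ 0} > 0` — then there is a sequence `(A m)` of measurable sets such
that for all `m > 1`: `0 < ν (A m) < ∞`, `A m ⊆ Ψ^{m-1}(B)` for some measurable `B`, and
`A m` is not the image `Ψ^m(S)` of any measurable set `S` of positive measure. -/
theorem exists_sets_of_infinite_ascent
    {E : Type*} [MeasurableSpace E] (ν : Measure E) [SigmaFinite ν]
    (Ψ : E → E) (hΨ : Measurable Ψ) (hns : ν.map Ψ ≪ ν)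
    (himg : ∀ S : Set E, MeasurableSet S → MeasurableSet (Ψ '' S))
    (hasc : ∀ m, 1 ≤ m → ∃ f : E → ℂ, Measurable f ∧ (f ∘ Ψ^[m] =ᵐ[ν] 0) ∧
      0 < ν {x | f (Ψ^[m - 1] x) ≠ 0}) :
    ∃ A : ℕ → Set E, ∀ m, 1 < m →
      MeasurableSet (A m) ∧ 0 < ν (A m) ∧ ν (A m) < ⊤ ∧
      (∃ B : Set E, MeasurableSet B ∧ A m ⊆ Ψ^[m - 1] '' B) ∧
      ¬ ∃ S : Set E, MeasurableSet S ∧ 0 < ν S ∧ A m = Ψ^[m] '' S := by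
  have key : ∀ m : ℕ, ∃ Am : Set E, 1 < m →
      MeasurableSet Am ∧ 0 < ν Am ∧ ν Am < ⊤ ∧
      (∃ B : Set E, MeasurableSet B ∧ Am ⊆ Ψ^[m - 1] '' B) ∧
      ¬ ∃ S : Set E, MeasurableSet S ∧ 0 < ν S ∧ Am = Ψ^[m] '' S := by
    intro m
    by_cases hm : 1 < m
    swap
    · exact ⟨∅, fun h => absurd h hm⟩
    obtain ⟨f, hf, hf0, hfpos⟩ := hasc m hm.le
    set N : Set E := {x | f x ≠ 0} with hNdef
    have hNmeas : MeasurableSet N := hf (measurableSet_singleton 0).compl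
    set W : Set E := (Ψ^[m - 1]) ⁻¹' N with hWdef
    have hWmeas : MeasurableSet W := (hΨ.iterate (m - 1)) hNmeas
    have hWpos : 0 < ν W := hfpos
    -- the preimage of N under Ψ^[m] is null
    have hnull : ν ((Ψ^[m]) ⁻¹' N) = 0 := by
      have : ν {x | ¬ (f ∘ Ψ^[m]) x = (0 : E → ℂ) x} = 0 := ae_iff.mp hf0
      simpa [Set.preimage, N, Function.comp] using this
    set A0 : Set E := Ψ^[m - 1] '' W with hA0def
    have hA0meas : MeasurableSet A0 := image_iterate_measurable himg (m - 1) W hWmeas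
    have hA0subN : A0 ⊆ N := by
      rintro y ⟨x, hx, rfl⟩
      exact hx
    have hA0pos : 0 < ν A0 := by
      by_contra h
      push_neg at h
      have h0 : ν A0 = 0 := le_antisymm h bot_le
      have hWsub : W ⊆ (Ψ^[m - 1]) ⁻¹' A0 := fun x hx => Set.mem_image_of_mem _ hx
      have : ν ((Ψ^[m - 1]) ⁻¹' A0) = 0 :=
        preimage_iterate_null hΨ hns (m - 1) A0 hA0meas h0
      exact absurd (le_antisymm (le_trans (measure_mono hWsub) this.le) bot_le)
        hWpos.ne'
    obtain ⟨A1, hA1meas, hA1sub, hA1pos, hA1lt⟩ :=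
      Measure.exists_subset_measure_lt_top hA0meas hA0pos
    refine ⟨A1, fun _ => ⟨hA1meas, hA1pos, hA1lt, ⟨W, hWmeas, hA1sub⟩, ?_⟩⟩
    rintro ⟨S, hSmeas, hSpos, hSeq⟩
    have hSsub : S ⊆ (Ψ^[m]) ⁻¹' N := by
      intro x hx
      have : Ψ^[m] x ∈ A1 := hSeq ▸ Set.mem_image_of_mem _ hx
      exact hA0subN (hA1sub this)
    exact absurd (le_antisymm (le_trans (measure_mono hSsub) hnull.le) bot_le) hSpos.ne'
  choose A hA using key
  exact ⟨A, hA⟩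
end

section
/- Let Ψ : ℕ → ℕ be any map (inducing the composition operator C_Ψ on the Orlicz–Lorentz sequence space over ℕ with counting measure). Then the following are equivalent: (i) for every m ≥ 1 there exists a function f : ℕ → ℂ with f∘Ψ^m = 0 everywhere but f∘Ψ^{m-1} not identically 0 (i.e. C_Ψ has infinite ascent); (ii) there exists a sequence (n_m)_{m ≥ 1} of pairwise distinct natural numbers such that for every m ≥ 1, n_m belongs to the range of Ψ^{m-1} but not to the range of Ψ^m. -/
lemma range_iterate_anti (Ψ : ℕ → ℕ) {a b : ℕ} (h : a ≤ b) :
    Set.range (Ψ^[b]) ⊆ Set.range (Ψ^[a]) := by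
  obtain ⟨c, rfl⟩ := Nat.exists_eq_add_of_le h
  rintro x ⟨k, rfl⟩
  rw [Function.iterate_add_apply]
  exact ⟨Ψ^[c] k, rfl⟩

/-- For a map `Ψ : ℕ → ℕ` (with the counting measure, so a.e. equality is pointwise
equality), the composition operator on the Orlicz–Lorentz sequence space has infinite
ascent — for every `m ≥ 1` there is `f : ℕ → ℂ` with `f ∘ Ψ^m = 0` everywhere but
`f ∘ Ψ^{m-1}` not identically `0` — iff there is a sequence `(n m)` of pairwise distinct
natural numbers with `n m ∈ range (Ψ^{m-1})` and `n m ∉ range (Ψ^m)` for every `m ≥ 1`. -/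
theorem sequence_infinite_ascent_iff
    (Ψ : ℕ → ℕ) :
    (∀ m, 1 ≤ m → ∃ f : ℕ → ℂ,
      (∀ k, f (Ψ^[m] k) = 0) ∧ ¬ (∀ k, f (Ψ^[m - 1] k) = 0)) ↔
    (∃ n : ℕ → ℕ,
      (∀ m₁ m₂, 1 ≤ m₁ → 1 ≤ m₂ → n m₁ = n m₂ → m₁ = m₂) ∧
      (∀ m, 1 ≤ m → n m ∈ Set.range (Ψ^[m - 1]) ∧ n m ∉ Set.range (Ψ^[m]))) := by
  constructor
  · intro h
    have key : ∀ m, 1 ≤ m → ∃ x, x ∈ Set.range (Ψ^[m - 1]) ∧ x ∉ Set.range (Ψ^[m]) := by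
      intro m hm
      obtain ⟨f, hf0, hf1⟩ := h m hm
      push_neg at hf1
      obtain ⟨k, hk⟩ := hf1
      refine ⟨Ψ^[m - 1] k, ⟨k, rfl⟩, ?_⟩
      rintro ⟨j, hj⟩
      exact hk (hj ▸ hf0 j)
    set n : ℕ → ℕ := fun m => if hm : 1 ≤ m then (key m hm).choose else 0 with hn
    have hmem : ∀ m (hm : 1 ≤ m),
        n m ∈ Set.range (Ψ^[m - 1]) ∧ n m ∉ Set.range (Ψ^[m]) := by
      intro m hm
      simp only [hn, dif_pos hm]
      exact (key m hm).choose_spec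
    refine ⟨n, ?_, hmem⟩
    intro m₁ m₂ h₁ h₂ heq
    by_contra hne
    wlog hlt : m₁ < m₂ generalizing m₁ m₂
    · exact this m₂ m₁ h₂ h₁ heq.symm (Ne.symm hne) (lt_of_le_of_ne (not_lt.mp hlt) (Ne.symm hne))
    have h1 : n m₂ ∈ Set.range (Ψ^[m₁]) :=
      range_iterate_anti Ψ (by omega : m₁ ≤ m₂ - 1) (hmem m₂ h₂).1
    exact (hmem m₁ h₁).2 (heq ▸ h1)
  · rintro ⟨n, -, hn⟩ m hm
    obtain ⟨⟨k₀, hk₀⟩, hnot⟩ := hn m hm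
    refine ⟨fun x => if x = n m then 1 else 0, ?_, ?_⟩
    · intro k
      simp only [ite_eq_right_iff]
      intro hk
      exact absurd ⟨k, hk⟩ hnot
    · intro hall
      have := hall k₀
      rw [hk₀] at this
      simp at this
end

section
/- Let (E, 𝓔, ν) be a separable σ-finite measure space (i.e. any two distinct points of E lie in disjoint measurable sets of positive measure) and let Ψ : E → E be measurable. Suppose that for every natural number m the restriction of Ψ to the image Ψ^m(E), viewed as a map Ψ^m(E) → Ψ^m(E), is not injective, i.e. for every m there exist x₁, x₂ ∈ E with Ψ^m(x₁) ≠ Ψ^m(x₂) and Ψ^{m+1}(x₁) = Ψ^{m+1}(x₂). Then for every natural number m the set {f∘Ψ^{m+1} : f : E → ℂ measurable} is strictly contained in the set {f∘Ψ^m : f : E → ℂ measurable}; in particular the descent of the composition operator C_Ψ is infinite. (Contrapositively: if C_Ψ has finite descent, then Ψ restricted to Ψ^m(E) is injective for some m.) -/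
open MeasureTheory

/-- Let `(E, 𝓔, ν)` be a separable σ-finite measure space and `Ψ : E → E` measurable.
If for every `m` the restriction of `Ψ` to `Ψ^m(E)` is not injective (there are
`x₁, x₂` with `Ψ^m x₁ ≠ Ψ^m x₂` but `Ψ^{m+1} x₁ = Ψ^{m+1} x₂`), then for every `m`
the range of `C_Ψ^{m+1}` is strictly contained in the range of `C_Ψ^m`; in particular
the composition operator has infinite descent. -/
theorem infinite_descent_of_not_injective_on_ranges
    {E : Type*} [MeasurableSpace E] (ν : Measure E) [SigmaFinite ν]
    (hsep : ∀ x y : E, x ≠ y → ∃ E₁ E₂ : Set E, MeasurableSet E₁ ∧ MeasurableSet E₂ ∧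
      Disjoint E₁ E₂ ∧ 0 < ν E₁ ∧ 0 < ν E₂ ∧ x ∈ E₁ ∧ y ∈ E₂)
    (Ψ : E → E) (hΨ : Measurable Ψ)
    (hni : ∀ m : ℕ, ∃ x₁ x₂ : E, Ψ^[m] x₁ ≠ Ψ^[m] x₂ ∧ Ψ^[m + 1] x₁ = Ψ^[m + 1] x₂) :
    ∀ m : ℕ,
      {g : E → ℂ | ∃ f : E → ℂ, Measurable f ∧ g = f ∘ Ψ^[m + 1]} ⊂
      {g : E → ℂ | ∃ f : E → ℂ, Measurable f ∧ g = f ∘ Ψ^[m]} := by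
  intro m
  constructor
  · rintro g ⟨f, hf, rfl⟩
    exact ⟨f ∘ Ψ, hf.comp hΨ, by rw [Function.iterate_succ']; rfl⟩
  · intro hsub
    obtain ⟨x₁, x₂, hne, heq⟩ := hni m
    obtain ⟨E₁, E₂, hE₁, _, hdis, _, _, hx₁, hx₂⟩ := hsep _ _ hne
    have hg : (E₁.indicator (fun _ => (1:ℂ))) ∘ Ψ^[m] ∈
        {g : E → ℂ | ∃ f : E → ℂ, Measurable f ∧ g = f ∘ Ψ^[m]} :=
      ⟨_, measurable_const.indicator hE₁, rfl⟩
    obtain ⟨f, _, hfe⟩ := hsub hg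
    have h1 : (E₁.indicator (fun _ => (1:ℂ)) ∘ Ψ^[m]) x₁ =
        (E₁.indicator (fun _ => (1:ℂ)) ∘ Ψ^[m]) x₂ := by
      rw [hfe]
      simp only [Function.comp_apply, heq]
    have hnot : Ψ^[m] x₂ ∉ E₁ := Set.disjoint_right.mp hdis hx₂
    simp only [Function.comp_apply, Set.indicator_of_mem hx₁,
      Set.indicator_of_notMem hnot] at h1
    exact one_ne_zero h1
end

section
/- Let (E, 𝓔, ν) be a separable σ-finite measure space (i.e. any two distinct points of E lie in disjoint measurable sets of positive measure), let Ψ : E → E be measurable, and let m be a natural number. If {f∘Ψ^{m+1} : f : E → ℂ measurable} = {f∘Ψ^m : f : E → ℂ measurable} (i.e. the composition operator C_Ψ has descent at most m), then the restriction of Ψ to the image Ψ^m(E), viewed as a map Ψ^m(E) → Ψ^m(E), is injective; that is, for all x₁, x₂ ∈ E, Ψ^{m+1}(x₁) = Ψ^{m+1}(x₂) implies Ψ^m(x₁) = Ψ^m(x₂). -/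
open MeasureTheory

/-- Let `(E, 𝓔, ν)` be a separable σ-finite measure space, `Ψ : E → E` measurable and
`m` a natural number.  If the range of `C_Ψ^{m+1}` equals the range of `C_Ψ^m`
(the composition operator has descent at most `m`), then the restriction of `Ψ` to
`Ψ^m(E)` is injective: `Ψ^{m+1} x₁ = Ψ^{m+1} x₂` implies `Ψ^m x₁ = Ψ^m x₂`. -/
theorem injective_on_range_of_descent_le
    {E : Type*} [MeasurableSpace E] (ν : Measure E) [SigmaFinite ν]
    (hsep : ∀ x y : E, x ≠ y → ∃ E₁ E₂ : Set E, MeasurableSet E₁ ∧ MeasurableSet E₂ ∧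
      Disjoint E₁ E₂ ∧ 0 < ν E₁ ∧ 0 < ν E₂ ∧ x ∈ E₁ ∧ y ∈ E₂)
    (Ψ : E → E) (hΨ : Measurable Ψ) (m : ℕ)
    (hdesc : {g : E → ℂ | ∃ f : E → ℂ, Measurable f ∧ g = f ∘ Ψ^[m + 1]} =
      {g : E → ℂ | ∃ f : E → ℂ, Measurable f ∧ g = f ∘ Ψ^[m]}) :
    ∀ x₁ x₂ : E, Ψ^[m + 1] x₁ = Ψ^[m + 1] x₂ → Ψ^[m] x₁ = Ψ^[m] x₂ := by
  intro x₁ x₂ heq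
  by_contra hne
  obtain ⟨E₁, E₂, hE₁, hE₂, hdisj, -, -, hx₁, hx₂⟩ := hsep _ _ hne
  set f : E → ℂ := E₁.indicator (fun _ => 1) with hf
  have hfm : Measurable f := (measurable_const.indicator hE₁)
  have hmem : f ∘ Ψ^[m] ∈ {g : E → ℂ | ∃ f : E → ℂ, Measurable f ∧ g = f ∘ Ψ^[m]} :=
    ⟨f, hfm, rfl⟩
  rw [← hdesc] at hmem
  obtain ⟨h, -, hh⟩ := hmem
  have h1 : f (Ψ^[m] x₁) = h (Ψ^[m + 1] x₁) := congrFun hh x₁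
  have h2 : f (Ψ^[m] x₂) = h (Ψ^[m + 1] x₂) := congrFun hh x₂
  rw [heq, ← h2] at h1
  have v1 : f (Ψ^[m] x₁) = 1 := Set.indicator_of_mem hx₁ _
  have v2 : f (Ψ^[m] x₂) = 0 := Set.indicator_of_notMem (fun hc => hdisj.ne_of_mem hc hx₂ rfl) _
  rw [v1, v2] at h1
  exact one_ne_zero h1
end

section
/- Let (E, 𝓔, ν) be a measure space in which every singleton set is measurable and has positive measure, let Ψ : E → E be measurable, and let m be a natural number. Suppose the restriction of Ψ to the image Ψ^m(E) is not injective, i.e. there exist x₁, x₂ ∈ E with Ψ^m(x₁) ≠ Ψ^m(x₂) and Ψ^{m+1}(x₁) = Ψ^{m+1}(x₂). Then there exists a measurable function f : E → ℂ such that f∘Ψ^m is not ν-almost-everywhere equal to g∘Ψ^{m+1} for any measurable g : E → ℂ; in particular the descent of the composition operator C_Ψ is greater than m. -/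
open MeasureTheory

/-- Let `(E, 𝓔, ν)` be a measure space in which every singleton is measurable with
positive measure, `Ψ : E → E` measurable, `m : ℕ`.  If the restriction of `Ψ` to
`Ψ^m(E)` is not injective (there are `x₁, x₂` with `Ψ^m x₁ ≠ Ψ^m x₂` and
`Ψ^{m+1} x₁ = Ψ^{m+1} x₂`), then there is a measurable `f : E → ℂ` so that `f ∘ Ψ^m`
is not ν-a.e. equal to `g ∘ Ψ^{m+1}` for any measurable `g`; in particular the descent
of the composition operator exceeds `m`. -/
theorem descent_gt_of_not_injective_on_range
    {E : Type*} [MeasurableSpace E] (ν : Measure E)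
    (hsingleton : ∀ x : E, MeasurableSet {x} ∧ 0 < ν {x})
    (Ψ : E → E) (hΨ : Measurable Ψ) (m : ℕ)
    (hni : ∃ x₁ x₂ : E, Ψ^[m] x₁ ≠ Ψ^[m] x₂ ∧ Ψ^[m + 1] x₁ = Ψ^[m + 1] x₂) :
    ∃ f : E → ℂ, Measurable f ∧
      ∀ g : E → ℂ, Measurable g → ¬ (f ∘ Ψ^[m] =ᵐ[ν] g ∘ Ψ^[m + 1]) := by
  obtain ⟨x₁, x₂, hne, heq⟩ := hni
  refine ⟨Set.indicator {Ψ^[m] x₁} 1, ?_, ?_⟩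
  · exact ((measurable_const).indicator (hsingleton _).1)
  · intro g hg hae
    -- a.e. equality implies everywhere equality since singletons have positive measure
    have hall : ∀ x : E, (Set.indicator {Ψ^[m] x₁} (1 : E → ℂ)) (Ψ^[m] x)
        = g (Ψ^[m + 1] x) := by
      intro x
      by_contra hx
      have hsub : {x} ⊆ {y | ¬ (Set.indicator {Ψ^[m] x₁} (1 : E → ℂ)) (Ψ^[m] y)
          = g (Ψ^[m + 1] y)} := by
        intro y hy; simp only [Set.mem_singleton_iff] at hy; subst hy; exact hx
      have h0 : ν {y | ¬ (Set.indicator {Ψ^[m] x₁} (1 : E → ℂ)) (Ψ^[m] y)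
          = g (Ψ^[m + 1] y)} = 0 := hae
      exact absurd (measure_mono_null hsub h0) (hsingleton x).2.ne'
    have h1 := hall x₁
    have h2 := hall x₂
    rw [heq] at h1
    rw [← h1] at h2
    simp [Set.indicator_apply, hne.symm] at h2
end
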